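/- Discrete energy decay for the one-step scheme: given real sequences and the discrete energy Fⁿ = (Φ(cⁿ),1) + (Cn²/2)·a_D(cⁿ,cⁿ) + α₂(Ψ(sⁿ),1) − α₃(Φ(cⁿ),sⁿ) + α₄((cⁿ)², sⁿ), if the scheme identity ⟨Φ₊'(cⁿ)+Φ₋'(cⁿ⁻¹), cⁿ−cⁿ⁻¹⟩ − α₃⟨Φ₊'(cⁿ⁻¹)+Φ₋'(cⁿ), sⁿ(cⁿ−cⁿ⁻¹)⟩ + α₂⟨Ψ'(sⁿ), sⁿ−sⁿ⁻¹⟩ + Cn²·a_D(cⁿ, cⁿ−cⁿ⁻¹) − α₃⟨Φ(cⁿ⁻¹), sⁿ−sⁿ⁻¹⟩ + α₄⟨sⁿ, (cⁿ)²−(cⁿ⁻¹)²⟩ + α₄⟨sⁿ−sⁿ⁻¹, (cⁿ⁻¹)²⟩ ≤ 0 holds, sⁿ ≥ 0 pointwise, a_D is a symmetric positive semidefinite bilinear form, Φ₊ is convex, Φ₋ concave, Ψ convex (all differentiable), and α₃ ≥ 0, then Fⁿ ≤ Fⁿ⁻¹. -/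

import Mathlib

/-!
Each term of the energy difference `E c₁ s₁ - E c₀ s₀` is bounded by the matching term of the
scheme. Since the convex part `Φ₊` is taken implicitly and the concave part `Φ₋` explicitly, the
tangent-line inequalities of `Φ₊`, `Φ₋` and `Ψ` bound the increments of `Φ` and `Ψ` from above.
In the coupling term `-α₃ (Φ(c), s)` the roles of `Φ₊` and `Φ₋` are swapped, which bounds the
increment of `Φ` from below, and `sⁿ ≥ 0`, `α₃ ≥ 0` keep the sign right.
The symmetry of `a` gives `a(u, u - v) = (a(u, u) - a(v, v) + a(u - v, u - v)) / 2`, and the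
`α₄`-terms telescope exactly.
-/

open Finset

section TangentLine

variable {S : Set ℝ} {f : ℝ → ℝ} {x y : ℝ}

theorem ConvexOn.deriv_mul_sub_le_sub (hf : ConvexOn ℝ S f) (hx : x ∈ S) (hy : y ∈ S)
    (hfx : DifferentiableAt ℝ f x) : deriv f x * (y - x) ≤ f y - f x := by
  rcases lt_trichotomy x y with hxy | rfl | hyx
  · have h := hf.deriv_le_slope hx hy hxy hfx
    rwa [slope_def_field, le_div_iff₀ (sub_pos.2 hxy)] at h
  · simp
  · have h := hf.slope_le_deriv hy hx hyx hfx
    rw [slope_def_field, div_le_iff₀ (sub_pos.2 hyx)] at h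
    linear_combination h

theorem ConcaveOn.sub_le_deriv_mul_sub (hf : ConcaveOn ℝ S f) (hx : x ∈ S) (hy : y ∈ S)
    (hfx : DifferentiableAt ℝ f x) : f y - f x ≤ deriv f x * (y - x) := by
  have h := hf.neg.deriv_mul_sub_le_sub hx hy hfx.neg
  rw [deriv.neg, Pi.neg_apply, Pi.neg_apply] at h
  linear_combination h

end TangentLine

section Splitting

variable {Φp Φm Φ : ℝ → ℝ} {a b : ℝ}

theorem sub_le_convex_concave_splitting (hp : ConvexOn ℝ Set.univ Φp)
    (hm : ConcaveOn ℝ Set.univ Φm) (hΦ : ∀ x, Φ x = Φp x + Φm x)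
    (hpb : DifferentiableAt ℝ Φp b) (hma : DifferentiableAt ℝ Φm a) :
    Φ b - Φ a ≤ (deriv Φp b + deriv Φm a) * (b - a) := by
  have hpb' := hp.deriv_mul_sub_le_sub (Set.mem_univ b) (Set.mem_univ a) hpb
  have hma' := hm.sub_le_deriv_mul_sub (Set.mem_univ a) (Set.mem_univ b) hma
  rw [hΦ, hΦ]
  linear_combination hpb' + hma'

theorem swapped_convex_concave_splitting_le_sub (hp : ConvexOn ℝ Set.univ Φp)
    (hm : ConcaveOn ℝ Set.univ Φm) (hΦ : ∀ x, Φ x = Φp x + Φm x)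
    (hpa : DifferentiableAt ℝ Φp a) (hmb : DifferentiableAt ℝ Φm b) :
    (deriv Φp a + deriv Φm b) * (b - a) ≤ Φ b - Φ a := by
  have hpa' := hp.deriv_mul_sub_le_sub (Set.mem_univ a) (Set.mem_univ b) hpa
  have hmb' := hm.sub_le_deriv_mul_sub (Set.mem_univ b) (Set.mem_univ a) hmb
  rw [hΦ, hΦ]
  linear_combination hpa' + hmb'

end Splitting

theorem half_sub_half_le_apply_sub {R M : Type*} [Field R] [LinearOrder R]
    [IsStrictOrderedRing R] [AddCommGroup M] [Module R M] (B : M →ₗ[R] M →ₗ[R] R)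
    (hsymm : ∀ u v, B u v = B v u) (hpsd : ∀ v, 0 ≤ B v v) (u v : M) :
    B u u / 2 - B v v / 2 ≤ B u (u - v) := by
  have hsq := hpsd (u - v)
  simp only [map_sub, LinearMap.sub_apply] at hsq ⊢
  linear_combination hsq / 2 + hsymm u v / 2

theorem discrete_energy_decay_general {ι : Type*} [Fintype ι]
    (Φp Φm Ψ : ℝ → ℝ)
    (hΦp_conv : ConvexOn ℝ Set.univ Φp) (hΦp_diff : Differentiable ℝ Φp)
    (hΦm_conc : ConcaveOn ℝ Set.univ Φm) (hΦm_diff : Differentiable ℝ Φm)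
    (hΨ_conv : ConvexOn ℝ Set.univ Ψ) (hΨ_diff : Differentiable ℝ Ψ)
    (Φ : ℝ → ℝ) (hΦ : ∀ x, Φ x = Φp x + Φm x)
    (aD : (ι → ℝ) →ₗ[ℝ] (ι → ℝ) →ₗ[ℝ] ℝ)
    (haD_symm : ∀ u v, aD u v = aD v u) (haD_psd : ∀ v, 0 ≤ aD v v)
    (Cn α₂ α₃ α₄ : ℝ)
    (hα₂ : 0 ≤ α₂) (hα₃ : 0 ≤ α₃)
    (c₀ c₁ s₀ s₁ : ι → ℝ) (hs₁ : ∀ i, 0 ≤ s₁ i)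
    (E : (ι → ℝ) → (ι → ℝ) → ℝ)
    (hE : ∀ c s, E c s =
      (∑ i, Φ (c i)) + Cn ^ 2 / 2 * aD c c + α₂ * ∑ i, Ψ (s i)
        - α₃ * ∑ i, Φ (c i) * s i + α₄ * ∑ i, (c i) ^ 2 * s i)
    (hscheme :
      (∑ i, (deriv Φp (c₁ i) + deriv Φm (c₀ i)) * (c₁ i - c₀ i))
        - α₃ * (∑ i, (deriv Φp (c₀ i) + deriv Φm (c₁ i)) * (s₁ i * (c₁ i - c₀ i)))
        + α₂ * (∑ i, deriv Ψ (s₁ i) * (s₁ i - s₀ i))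
        + Cn ^ 2 * aD c₁ (c₁ - c₀)
        - α₃ * (∑ i, Φ (c₀ i) * (s₁ i - s₀ i))
        + α₄ * (∑ i, s₁ i * ((c₁ i) ^ 2 - (c₀ i) ^ 2))
        + α₄ * (∑ i, (s₁ i - s₀ i) * (c₀ i) ^ 2) ≤ 0) :
    E c₁ s₁ ≤ E c₀ s₀ := by
  rw [hE, hE]
  have hΦ_step := sum_le_sum fun i (_ : i ∈ univ) => sub_le_convex_concave_splitting
    hΦp_conv hΦm_conc hΦ (hΦp_diff (c₁ i)) (hΦm_diff (c₀ i))
  have hcoupling := sum_le_sum fun i (_ : i ∈ univ) =>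
    show (deriv Φp (c₀ i) + deriv Φm (c₁ i)) * (s₁ i * (c₁ i - c₀ i))
        + Φ (c₀ i) * (s₁ i - s₀ i) ≤ Φ (c₁ i) * s₁ i - Φ (c₀ i) * s₀ i by
      linear_combination mul_le_mul_of_nonneg_left
        (swapped_convex_concave_splitting_le_sub hΦp_conv hΦm_conc hΦ
          (hΦp_diff (c₀ i)) (hΦm_diff (c₁ i))) (hs₁ i)
  have hΨ_step := sum_le_sum fun i (_ : i ∈ univ) =>
    show Ψ (s₁ i) - Ψ (s₀ i) ≤ deriv Ψ (s₁ i) * (s₁ i - s₀ i) by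
      linear_combination
        hΨ_conv.deriv_mul_sub_le_sub (Set.mem_univ _) (Set.mem_univ (s₀ i)) (hΨ_diff (s₁ i))
  have hquad := mul_le_mul_of_nonneg_left
    (half_sub_half_le_apply_sub aD haD_symm haD_psd c₁ c₀) (sq_nonneg Cn)
  have hα₄_telescope : ∑ i, (c₁ i ^ 2 * s₁ i - c₀ i ^ 2 * s₀ i) =
      ∑ i, (s₁ i * (c₁ i ^ 2 - c₀ i ^ 2) + (s₁ i - s₀ i) * c₀ i ^ 2) :=
    sum_congr rfl fun i _ => by ring
  simp only [sum_add_distrib, sum_sub_distrib] at hΦ_step hcoupling hΨ_step hα₄_telescope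
  linear_combination hscheme + hΦ_step + mul_le_mul_of_nonneg_left hcoupling hα₃
    + mul_le_mul_of_nonneg_left hΨ_step hα₂ + hquad + α₄ * hα₄_telescope

theorem discrete_energy_decay {ι : Type*} [Fintype ι]
    (Φp Φm Ψ : ℝ → ℝ)
    (hΦp_conv : ConvexOn ℝ Set.univ Φp) (hΦp_diff : Differentiable ℝ Φp)
    (hΦm_conc : ConcaveOn ℝ Set.univ Φm) (hΦm_diff : Differentiable ℝ Φm)
    (hΨ_conv : ConvexOn ℝ Set.univ Ψ) (hΨ_diff : Differentiable ℝ Ψ)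
    (Φ : ℝ → ℝ) (hΦ : ∀ x, Φ x = Φp x + Φm x)
    (aD : (ι → ℝ) →ₗ[ℝ] (ι → ℝ) →ₗ[ℝ] ℝ)
    (haD_symm : ∀ u v, aD u v = aD v u) (haD_psd : ∀ v, 0 ≤ aD v v)
    (Cn α₂ α₃ α₄ : ℝ)
    (hCn : 0 ≤ Cn) (hα₂ : 0 ≤ α₂) (hα₃ : 0 ≤ α₃) (hα₄ : 0 ≤ α₄)
    (c₀ c₁ s₀ s₁ : ι → ℝ) (hs₁ : ∀ i, 0 ≤ s₁ i)
    (E : (ι → ℝ) → (ι → ℝ) → ℝ)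
    (hE : ∀ c s, E c s =
      (∑ i, Φ (c i)) + Cn ^ 2 / 2 * aD c c + α₂ * ∑ i, Ψ (s i)
        - α₃ * ∑ i, Φ (c i) * s i + α₄ * ∑ i, (c i) ^ 2 * s i)
    (hscheme :
      (∑ i, (deriv Φp (c₁ i) + deriv Φm (c₀ i)) * (c₁ i - c₀ i))
        - α₃ * (∑ i, (deriv Φp (c₀ i) + deriv Φm (c₁ i)) * (s₁ i * (c₁ i - c₀ i)))
        + α₂ * (∑ i, deriv Ψ (s₁ i) * (s₁ i - s₀ i))
        + Cn ^ 2 * aD c₁ (c₁ - c₀)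
        - α₃ * (∑ i, Φ (c₀ i) * (s₁ i - s₀ i))
        + α₄ * (∑ i, s₁ i * ((c₁ i) ^ 2 - (c₀ i) ^ 2))
        + α₄ * (∑ i, (s₁ i - s₀ i) * (c₀ i) ^ 2) ≤ 0) :
    E c₁ s₁ ≤ E c₀ s₀ :=
  discrete_energy_decay_general Φp Φm Ψ hΦp_conv hΦp_diff hΦm_conc hΦm_diff hΨ_conv hΨ_diff Φ hΦ aD
    haD_symm haD_psd Cn α₂ α₃ α₄ hα₂ hα₃ c₀ c₁ s₀ s₁ hs₁ E hE hscheme
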